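/- arXiv:1502.03147 — 8 statements merged into one kernel-verified Lean document; each statement's English description precedes it below -/
import Mathlib

section
/- Let n, m₁, m₂ be positive integers, let k ≤ n be a natural number, and let V₁ ∈ ℂ^{n×m₁}, V₂ ∈ ℂ^{n×m₂} be matrices with rank(V₁) ≥ k and rank(V₂) ≥ k. If for every pair of n×n diagonal matrices D₁, D₂ with all diagonal entries nonzero we have rank([D₁V₁ | D₂V₂]) ≤ k, then there are at least n − k row indices t such that row t of V₁ and row t of V₂ are both zero (i.e., [V₁ | V₂] has at least n − k zero rows). (This is the deterministic core of Lemma 1 of the paper, where k = n/2: two transmitters interfering at a common receiver that each achieve rank n/2 while keeping the joint interference rank at most n/2 must be simultaneously silent in at least n/2 time slots.) -/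
/-!
Let `R` be the column space of `V₂`. Comparing ranks, `dim R ≤ k` and `R` contains the column
space of every `D V₁` (`D` invertible diagonal), which has dimension at least `k`; hence
`col V₁ = R` and `D R ⊆ R` for all such `D`. A subspace stable under all invertible diagonal
scalings contains the coordinate vector `eₜ` of every coordinate `t` on which it does not vanish,
so the rows where `V₁` or `V₂` is nonzero index linearly independent vectors of `R`, at most `k`
of them.
-/

open Matrix Module

namespace Matrix

section Range

variable {R : Type*} [CommSemiring R] {n m₁ m₂ : Type*} [Fintype m₁] [Fintype m₂]

lemma range_mulVecLin_le_range_fromCols_left (A : Matrix n m₁ R) (B : Matrix n m₂ R) :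
    LinearMap.range A.mulVecLin ≤ LinearMap.range (fromCols A B).mulVecLin := by
  rintro _ ⟨v, rfl⟩
  exact ⟨Sum.elim v 0, by simp⟩

lemma range_mulVecLin_le_range_fromCols_right (A : Matrix n m₁ R) (B : Matrix n m₂ R) :
    LinearMap.range B.mulVecLin ≤ LinearMap.range (fromCols A B).mulVecLin := by
  rintro _ ⟨v, rfl⟩
  exact ⟨Sum.elim 0 v, by simp⟩

end Range

variable {K : Type*} [Field K] {n m₁ m₂ : Type*} [Fintype m₁] [Fintype m₂]

lemma rank_le_rank_fromCols_right (A : Matrix n m₁ K) (B : Matrix n m₂ K) :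
    B.rank ≤ (fromCols A B).rank :=
  Submodule.finrank_mono (range_mulVecLin_le_range_fromCols_right A B)

lemma range_mulVecLin_le_of_rank_fromCols_le {A : Matrix n m₁ K} {B : Matrix n m₂ K} {k : ℕ}
    (hB : k ≤ B.rank) (h : (fromCols A B).rank ≤ k) :
    LinearMap.range A.mulVecLin ≤ LinearMap.range B.mulVecLin := by
  have hAB : LinearMap.range B.mulVecLin = LinearMap.range (fromCols A B).mulVecLin :=
    Submodule.eq_of_le_of_finrank_le (range_mulVecLin_le_range_fromCols_right A B) (h.trans hB)
  exact hAB ▸ range_mulVecLin_le_range_fromCols_left A B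

end Matrix

namespace Submodule

variable {K ι : Type*} [Field K] [NeZero (2 : K)] [DecidableEq ι] {W : Submodule K (ι → K)}

lemma single_one_mem_of_forall_mul_mem (hW : ∀ d : ι → K, (∀ t, d t ≠ 0) → ∀ w ∈ W, d * w ∈ W)
    {w : ι → K} (hw : w ∈ W) {t : ι} (ht : w t ≠ 0) : Pi.single t 1 ∈ W := by
  -- scaling the `t`-th coordinate by `2` and subtracting `w` isolates that coordinate
  set d : ι → K := 1 + Pi.single t 1
  have hd : ∀ s, d s ≠ 0 := by
    intro s
    by_cases hs : s = t
    · subst hs; simpa [d, one_add_one_eq_two] using two_ne_zero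
    · simp [d, Pi.single_eq_of_ne hs]
  have hsingle : d * w - w = w t • Pi.single t 1 := by
    ext s
    by_cases hs : s = t
    · subst hs
      simp only [d, Pi.sub_apply, Pi.mul_apply, Pi.add_apply, Pi.one_apply, Pi.single_eq_same,
        Pi.smul_apply, smul_eq_mul]
      ring
    · simp [d, Pi.single_eq_of_ne hs]
  have hmem : w t • Pi.single t (1 : K) ∈ W := hsingle ▸ W.sub_mem (hW d hd w hw) hw
  simpa [smul_smul, inv_mul_cancel₀ ht] using W.smul_mem (w t)⁻¹ hmem

lemma ncard_support_le_finrank_of_forall_mul_mem [Fintype ι]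
    (hW : ∀ d : ι → K, (∀ t, d t ≠ 0) → ∀ w ∈ W, d * w ∈ W) :
    {t | ∃ w ∈ W, w t ≠ 0}.ncard ≤ finrank K W := by
  classical
  set T := {t | ∃ w ∈ W, w t ≠ 0}
  have hsingle (t : T) : Pi.single (t : ι) (1 : K) ∈ W := by
    obtain ⟨w, hw, ht⟩ := t.2
    exact single_one_mem_of_forall_mul_mem hW hw ht
  have hli : LinearIndependent K fun t : T ↦ (⟨Pi.single (t : ι) 1, hsingle t⟩ : W) :=
    LinearIndependent.of_comp W.subtype <|
      (Pi.linearIndependent_single_one ι K).comp _ Subtype.val_injective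
  simpa [← Nat.card_coe_set_eq, Nat.card_eq_fintype_card] using hli.fintype_card_le_finrank

end Submodule

theorem stmt_0_general (n m₁ m₂ k : ℕ)
    (V₁ : Matrix (Fin n) (Fin m₁) ℂ) (V₂ : Matrix (Fin n) (Fin m₂) ℂ)
    (hr₁ : k ≤ V₁.rank) (hr₂ : k ≤ V₂.rank)
    (h : ∀ d₁ d₂ : Fin n → ℂ, (∀ t, d₁ t ≠ 0) → (∀ t, d₂ t ≠ 0) →
      (Matrix.fromCols (Matrix.diagonal d₁ * V₁) (Matrix.diagonal d₂ * V₂)).rank ≤ k) :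
    n - k ≤ {t : Fin n | (∀ c, V₁ t c = 0) ∧ (∀ c, V₂ t c = 0)}.ncard := by
  set S := {t : Fin n | (∀ c, V₁ t c = 0) ∧ (∀ c, V₂ t c = 0)} with hS
  set R := LinearMap.range V₂.mulVecLin
  have one_ne : ∀ _ : Fin n, (1 : ℂ) ≠ 0 := fun _ ↦ one_ne_zero
  have hscaled (d : Fin n → ℂ) (hd : ∀ t, d t ≠ 0) :
      LinearMap.range (diagonal d * V₁).mulVecLin ≤ R :=
    range_mulVecLin_le_of_rank_fromCols_le hr₂ (by simpa using h d 1 hd one_ne)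
  have hR : finrank ℂ R ≤ k :=
    (rank_le_rank_fromCols_right V₁ V₂).trans (by simpa using h 1 1 one_ne one_ne)
  have hV₁ : LinearMap.range V₁.mulVecLin = R :=
    Submodule.eq_of_le_of_finrank_le (by simpa using hscaled 1 one_ne) (hR.trans hr₁)
  have hinv (d : Fin n → ℂ) (hd : ∀ t, d t ≠ 0) : ∀ w ∈ R, d * w ∈ R := by
    intro w hw
    obtain ⟨v, rfl⟩ := hV₁ ▸ hw
    exact hscaled d hd ⟨v, by ext; simp [mulVec_diagonal]⟩
  have hsupport : Sᶜ ⊆ {t | ∃ w ∈ R, w t ≠ 0} := by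
    intro t ht
    simp only [hS, Set.mem_compl_iff, Set.mem_ofPred_eq, not_and_or, not_forall] at ht
    rcases ht with ⟨c, hc⟩ | ⟨c, hc⟩
    · exact ⟨V₁ *ᵥ Pi.single c 1, hV₁ ▸ ⟨_, rfl⟩, by simpa [mulVec_single_one] using hc⟩
    · exact ⟨V₂ *ᵥ Pi.single c 1, ⟨_, rfl⟩, by simpa [mulVec_single_one] using hc⟩
  have hcompl := (Set.ncard_le_ncard hsupport).trans
    ((Submodule.ncard_support_le_finrank_of_forall_mul_mem hinv).trans hR)
  have htotal := Set.ncard_add_ncard_compl S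
  rw [Nat.card_eq_fintype_card, Fintype.card_fin] at htotal
  omega

/-- Deterministic core of Lemma 1: if two matrices each have rank at least `k`
and every nonzero diagonal scaling of them has joint rank at most `k`, then
they share at least `n - k` common zero rows. -/
theorem stmt_0 (n m₁ m₂ k : ℕ) (hn : 0 < n) (hm₁ : 0 < m₁) (hm₂ : 0 < m₂)
    (hk : k ≤ n)
    (V₁ : Matrix (Fin n) (Fin m₁) ℂ) (V₂ : Matrix (Fin n) (Fin m₂) ℂ)
    (hr₁ : k ≤ V₁.rank) (hr₂ : k ≤ V₂.rank)
    (h : ∀ d₁ d₂ : Fin n → ℂ, (∀ t, d₁ t ≠ 0) → (∀ t, d₂ t ≠ 0) →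
      (Matrix.fromCols (Matrix.diagonal d₁ * V₁) (Matrix.diagonal d₂ * V₂)).rank ≤ k) :
    n - k ≤ {t : Fin n | (∀ c, V₁ t c = 0) ∧ (∀ c, V₂ t c = 0)}.ncard :=
  stmt_0_general n m₁ m₂ k V₁ V₂ hr₁ hr₂ h
end

section
/- Let n be a positive even integer and let V₁ ∈ ℂ^{n×m₁}, V₂ ∈ ℂ^{n×m₂} be matrices with rank(V₁) ≥ n/2 and rank(V₂) ≥ n/2, and suppose that the number of row indices t for which row t of V₁ and row t of V₂ are both zero is strictly less than n/2. Then the set of pairs (d₁, d₂) ∈ ℂⁿ × ℂⁿ for which rank([diag(d₁)V₁ | diag(d₂)V₂]) ≤ n/2 is a Lebesgue-null set in ℂⁿ × ℂⁿ. (Almost-sure form of Lemma 1 of the paper: for almost all channel realizations, if the common silent slots of two jointly interfering transmitters number fewer than n/2, then their joint interference occupies more than an (n/2)-dimensional subspace.) -/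
/-!
The entries of `[diag(d₁) V₁ | diag(d₂) V₂]` are polynomials in `(d₁, d₂)`. If the rank exceeds
`r = n/2` at one realization, some `(r + 1)`-minor is a nonzero polynomial, and the rank exceeds `r`
off its zero set, which is null (Fubini and induction on the number of variables).

If `[V₁ | V₂]` itself has rank `≤ r = n/2`, its column space `W` is the column space of `V₁`
(and of `V₂`) and contains at most `r` coordinate vectors `e_t`. Fewer than `n - r` rows are zero in
both matrices, so some row `t` with `e_t ∉ W` is nonzero in, say, `V₂`. Zeroing row `t` of `V₂`
changes a column by a nonzero multiple of `e_t`, so the new column space contains `W + K e_t`.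
-/

open MeasureTheory Matrix MvPolynomial

namespace MvPolynomial

theorem measurable_eval {R ι : Type*} [CommSemiring R] [MeasurableSpace R] [MeasurableAdd₂ R]
    [MeasurableMul₂ R] (p : MvPolynomial ι R) : Measurable fun x : ι → R ↦ eval x p := by
  induction p using MvPolynomial.induction_on with
  | C a => simp only [eval_C]; exact measurable_const
  | add p q hp hq => simp only [map_add]; exact hp.add hq
  | mul_X p i hp => simp only [map_mul, eval_X]; exact hp.mul (measurable_pi_apply i)

variable {K : Type*} [Field K] [MeasurableSpace K] [MeasurableSingletonClass K]
  [MeasurableAdd₂ K] [MeasurableMul₂ K] (μ : Measure K) [SigmaFinite μ] [NullSingletonClass μ]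

theorem measure_setOf_eval_eq_zero_of_fin :
    ∀ {k : ℕ} {p : MvPolynomial (Fin k) K}, p ≠ 0 →
      Measure.pi (fun _ ↦ μ) {x | eval x p = 0} = 0
  | 0, p, hp => by
    obtain ⟨a, rfl⟩ := C_surjective (Fin 0) p
    have ha : a ≠ 0 := by simpa using hp
    simp [ha]
  | k + 1, p, hp => by
    set q := finSuccEquiv K k p
    obtain ⟨i, hi⟩ : ∃ i, q.coeff i ≠ 0 := by
      by_contra! h
      exact hp (by simpa [q] using (Polynomial.ext (by simpa using h) : q = 0))
    set e := MeasurableEquiv.piFinSuccAbove (fun _ : Fin (k + 1) ↦ K) 0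
    set T := e.symm ⁻¹' {x | eval x p = 0}
    have hT : MeasurableSet T :=
      (measurable_eval p).comp e.symm.measurable (measurableSet_singleton 0)
    -- off the null set where `q.coeff i` vanishes, each slice is the root set of a
    -- nonzero one-variable polynomial
    have hslice : ∀ᵐ s ∂Measure.pi (fun _ ↦ μ), μ ((fun a ↦ (a, s)) ⁻¹' T) = 0 := by
      refine measure_mono_null (fun s hs ↦ ?_) (measure_setOf_eval_eq_zero_of_fin hi)
      by_contra hqs
      have hq : q.map (eval s) ≠ 0 := fun h ↦ hqs (by simpa using congr(($h).coeff i))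
      refine hs ((Polynomial.finite_setOfPred_isRoot hq).measure_zero μ |> measure_mono_null ?_)
      intro a ha
      have hcons : e.symm (a, s) = Fin.cons a s := by
        simp [e, Fin.insertNthEquiv, Fin.insertNth_zero']
      simpa [T, hcons, q, eval_eq_eval_mv_eval'] using ha
    rw [← (measurePreserving_piFinSuccAbove (fun _ ↦ μ) 0).symm.measure_preimage_equiv,
      Measure.prod_apply_symm hT, lintegral_congr_ae hslice, lintegral_zero]

theorem measure_setOf_eval_eq_zero {ι : Type*} [Fintype ι] {p : MvPolynomial ι K} (hp : p ≠ 0) :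
    Measure.pi (fun _ : ι ↦ μ) {x | eval x p = 0} = 0 := by
  let f := (Fintype.equivFin ι).symm
  have hpre : MeasurableEquiv.piCongrLeft (fun _ ↦ K) f ⁻¹' {x | eval x p = 0} =
      {y | eval y (rename f.symm p) = 0} := by
    ext y
    have hy : MeasurableEquiv.piCongrLeft (fun _ ↦ K) f y = y ∘ f.symm := by
      funext i
      obtain ⟨j, rfl⟩ := f.surjective i
      simp [MeasurableEquiv.piCongrLeft_apply_apply]
    simp [hy, eval_rename]
  rw [← (measurePreserving_piCongrLeft (fun _ ↦ μ) f).measure_preimage_equiv, hpre]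
  exact measure_setOf_eval_eq_zero_of_fin μ
    (by simpa using (rename_injective _ f.symm.injective).ne hp)

end MvPolynomial

section LinearAlgebra

open Module Submodule Set

variable {K : Type*} [Field K]

theorem exists_linearIndependent_comp_of_le_finrank_span {V ι : Type*} [AddCommGroup V]
    [Module K V] [Finite ι] (v : ι → V) {r : ℕ} (hr : r ≤ finrank K (span K (range v))) :
    ∃ f : Fin r → ι, LinearIndependent K (v ∘ f) := by
  obtain ⟨κ, a, ha, hspan, hli⟩ := exists_linearIndependent' K v
  have : Finite κ := .of_injective a ha
  have : Fintype κ := .ofFinite κ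
  rw [← hspan, finrank_span_eq_card hli] at hr
  obtain ⟨e⟩ := Function.Embedding.nonempty_of_card_le
    (by simpa using hr : Fintype.card (Fin r) ≤ Fintype.card κ)
  exact ⟨a ∘ e, hli.comp e e.injective⟩

theorem ncard_setOf_single_mem_le_finrank {m : Type*} [Fintype m] [DecidableEq m]
    (W : Submodule K (m → K)) : {t | Pi.single t (1 : K) ∈ W}.ncard ≤ finrank K W := by
  classical
  set E := {t | Pi.single t (1 : K) ∈ W}
  have hli : LinearIndependent K fun t : E ↦ (⟨Pi.single t.1 1, t.2⟩ : W) :=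
    .of_comp W.subtype ((Pi.linearIndependent_single_one m K).comp _ Subtype.val_injective)
  rw [← Nat.card_coe_set_eq, Nat.card_eq_fintype_card]
  exact hli.fintype_card_le_finrank

namespace Matrix

variable {m k k₁ k₂ : Type*}

theorem exists_linearIndependent_row_submatrix [Finite m] [Fintype k] (A : Matrix m k K) {r : ℕ}
    (hr : r ≤ A.rank) :
    ∃ ρ : Fin r → m, LinearIndependent K (A.submatrix ρ id).row :=
  exists_linearIndependent_comp_of_le_finrank_span A.row (by rwa [← rank_eq_finrank_span_row])

theorem exists_det_submatrix_ne_zero [Fintype m] [Fintype k] (A : Matrix m k K) {r : ℕ}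
    (hr : r ≤ A.rank) :
    ∃ (ρ : Fin r → m) (γ : Fin r → k), (A.submatrix ρ γ).det ≠ 0 := by
  obtain ⟨γ, hγ⟩ := exists_linearIndependent_row_submatrix Aᵀ (r := r) (by rwa [rank_transpose])
  have hB : r ≤ (A.submatrix id γ).rank := by
    rw [← rank_transpose, transpose_submatrix, hγ.rank_matrix, Fintype.card_fin]
  obtain ⟨ρ, hρ⟩ := exists_linearIndependent_row_submatrix _ hB
  exact ⟨ρ, γ, ((isUnit_iff_isUnit_det _).mp (linearIndependent_rows_iff_isUnit.mp hρ)).ne_zero⟩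

theorem le_rank_of_det_submatrix_ne_zero [Fintype k] (A : Matrix m k K) {r : ℕ} (ρ : Fin r → m)
    (γ : Fin r → k) (h : (A.submatrix ρ γ).det ≠ 0) : r ≤ A.rank := by
  simpa [rank_of_det_ne_zero h] using rank_submatrix_le A ρ γ

theorem span_range_col_fromCols (A : Matrix m k₁ K) (B : Matrix m k₂ K) :
    span K (range (fromCols A B).col) = span K (range A.col) ⊔ span K (range B.col) := by
  have hcol : (fromCols A B).col = Sum.elim A.col B.col := by
    funext j
    cases j <;> rfl
  rw [hcol, Set.Sum.elim_range, span_union]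

theorem rank_fromCols_comm [Fintype k₁] [Fintype k₂] (A : Matrix m k₁ K) (B : Matrix m k₂ K) :
    (fromCols B A).rank = (fromCols A B).rank := by
  rw [← rank_submatrix (fromCols A B) (Equiv.refl m) (Equiv.sumComm k₂ k₁)]
  congr
  ext i (j | j) <;> rfl

variable [Fintype m] [DecidableEq m] [Fintype k₁] [Fintype k₂]

theorem rank_lt_rank_fromCols_diagonal_update_mul (V₁ : Matrix m k₁ K) (V₂ : Matrix m k₂ K)
    (hV : (fromCols V₁ V₂).rank ≤ V₁.rank) {t : m}
    (ht : Pi.single t 1 ∉ span K (range V₁.col)) {c : k₂} (hc : V₂ t c ≠ 0) :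
    V₁.rank < (fromCols V₁ (diagonal (Function.update (1 : m → K) t 0) * V₂)).rank := by
  set V₂' := diagonal (Function.update (1 : m → K) t 0) * V₂
  set W := span K (range V₁.col)
  set U := span K (range (fromCols V₁ V₂').col)
  have hV₂W : span K (range V₂.col) ≤ W := by
    have hWeq : W = W ⊔ span K (range V₂.col) := eq_of_le_of_finrank_le le_sup_left <| by
      rwa [← span_range_col_fromCols, ← rank_eq_finrank_span_cols, ← rank_eq_finrank_span_cols]
    exact hWeq ▸ le_sup_right
  have hU : U = W ⊔ span K (range V₂'.col) := span_range_col_fromCols _ _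
  have hWU : W ≤ U := hU ▸ le_sup_left
  have hcol : V₂'.col c = V₂.col c - V₂ t c • Pi.single t 1 := by
    funext j
    by_cases hj : j = t
    · subst hj; simp [V₂']
    · simp [V₂', hj]
  have htU : Pi.single t 1 ∈ U := by
    have h₁ : V₂'.col c ∈ U := hU ▸ mem_sup_right (subset_span ⟨c, rfl⟩)
    have h₂ : V₂.col c ∈ U := hWU (hV₂W (subset_span ⟨c, rfl⟩))
    have : V₂ t c • Pi.single t 1 ∈ U := by simpa [hcol] using sub_mem h₂ h₁
    exact (smul_mem_iff U hc).mp this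
  have hWU' : W < U := lt_of_le_of_ne hWU fun h ↦ ht (by rwa [h])
  rw [rank_eq_finrank_span_cols, rank_eq_finrank_span_cols]
  exact finrank_lt_finrank_of_lt hWU'

theorem exists_lt_rank_fromCols_diagonal_mul (V₁ : Matrix m k₁ K) (V₂ : Matrix m k₂ K) {r : ℕ}
    (h₁ : r ≤ V₁.rank) (h₂ : r ≤ V₂.rank)
    (hz : {t | (∀ c, V₁ t c = 0) ∧ ∀ c, V₂ t c = 0}.ncard + r < Fintype.card m) :
    ∃ d₁ d₂ : m → K, r < (fromCols (diagonal d₁ * V₁) (diagonal d₂ * V₂)).rank := by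
  by_cases hr : r < (fromCols V₁ V₂).rank
  · exact ⟨1, 1, by simpa using hr⟩
  push Not at hr
  set W := span K (range (fromCols V₁ V₂).col)
  have hW : W = span K (range V₁.col) ⊔ span K (range V₂.col) := span_range_col_fromCols _ _
  obtain ⟨t, ht⟩ :
      ∃ t, t ∉ {t | Pi.single t 1 ∈ W} ∪ {t | (∀ c, V₁ t c = 0) ∧ ∀ c, V₂ t c = 0} := by
    by_contra! h
    have hE := ncard_setOf_single_mem_le_finrank W
    have hunion := Set.ncard_union_le {t | Pi.single t (1 : K) ∈ W}
      {t | (∀ c, V₁ t c = 0) ∧ ∀ c, V₂ t c = 0}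
    rw [Set.eq_univ_of_forall h, ncard_univ, Nat.card_eq_fintype_card] at hunion
    rw [← rank_eq_finrank_span_cols] at hE
    omega
  simp only [mem_union, mem_ofPred_eq, not_or, not_and_or, not_forall] at ht
  obtain ⟨htW, ⟨c, hc⟩ | ⟨c, hc⟩⟩ := ht
  · refine ⟨Function.update 1 t 0, 1, ?_⟩
    have := rank_lt_rank_fromCols_diagonal_update_mul V₂ V₁ (by rw [rank_fromCols_comm]; omega)
      (fun h ↦ htW (hW ▸ mem_sup_right h)) hc
    rw [rank_fromCols_comm] at this
    simpa using h₂.trans_lt this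
  · refine ⟨1, Function.update 1 t 0, ?_⟩
    have := rank_lt_rank_fromCols_diagonal_update_mul V₁ V₂ (by omega)
      (fun h ↦ htW (hW ▸ mem_sup_left h)) hc
    simpa using h₁.trans_lt this

end Matrix

end LinearAlgebra

theorem Matrix.measure_setOf_rank_map_eval_le {K : Type*} [Field K] [MeasurableSpace K]
    [MeasurableSingletonClass K] [MeasurableAdd₂ K] [MeasurableMul₂ K] (μ : Measure K)
    [SigmaFinite μ] [NullSingletonClass μ] {ι m k : Type*} [Fintype ι] [Fintype m] [Fintype k]
    (A : Matrix m k (MvPolynomial ι K)) {x₀ : ι → K} {r : ℕ} (hr : r < (A.map (eval x₀)).rank) :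
    Measure.pi (fun _ ↦ μ) {x | (A.map (eval x)).rank ≤ r} = 0 := by
  obtain ⟨ρ, γ, hdet⟩ := exists_det_submatrix_ne_zero _ hr
  have heval : ∀ x, eval x (A.submatrix ρ γ).det = ((A.map (eval x)).submatrix ρ γ).det :=
    fun x ↦ RingHom.map_det _ _
  have hP : (A.submatrix ρ γ).det ≠ 0 := fun h ↦ hdet (by rw [← heval, h, map_zero])
  refine measure_mono_null (fun x (hx : _ ≤ r) ↦ ?_) (measure_setOf_eval_eq_zero μ hP)
  show eval x _ = 0
  rw [heval]
  by_contra hx₀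
  have := le_rank_of_det_submatrix_ne_zero _ ρ γ hx₀
  omega

theorem stmt_1_general (n m₁ m₂ : ℕ)
    (V₁ : Matrix (Fin n) (Fin m₁) ℂ) (V₂ : Matrix (Fin n) (Fin m₂) ℂ)
    (hr₁ : n / 2 ≤ V₁.rank) (hr₂ : n / 2 ≤ V₂.rank)
    (hz : {t : Fin n | (∀ c, V₁ t c = 0) ∧ (∀ c, V₂ t c = 0)}.ncard < n / 2) :
    MeasureTheory.volume {p : (Fin n → ℂ) × (Fin n → ℂ) |
      (Matrix.fromCols (Matrix.diagonal p.1 * V₁)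
        (Matrix.diagonal p.2 * V₂)).rank ≤ n / 2} = 0 := by
  obtain ⟨d₁, d₂, hd⟩ := exists_lt_rank_fromCols_diagonal_mul V₁ V₂ hr₁ hr₂
    (by rw [Fintype.card_fin]; omega)
  let A : Matrix (Fin n) (Fin m₁ ⊕ Fin m₂) (MvPolynomial (Fin n ⊕ Fin n) ℂ) :=
    fromCols (of fun i j ↦ X (.inl i) * C (V₁ i j)) (of fun i j ↦ X (.inr i) * C (V₂ i j))
  have hA : ∀ x, A.map (eval x) =
      fromCols (diagonal (fun i ↦ x (.inl i)) * V₁) (diagonal (fun i ↦ x (.inr i)) * V₂) := by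
    intro x
    ext i (j | j) <;> simp [A, diagonal_mul]
  rw [← (volume_measurePreserving_sumPiEquivProdPi fun _ ↦ ℂ).measure_preimage_equiv, volume_pi]
  simpa [hA, MeasurableEquiv.coe_sumPiEquivProdPi] using
    measure_setOf_rank_map_eval_le volume A (x₀ := Sum.elim d₁ d₂) (by simpa [hA] using hd)

/-- Almost-sure form of Lemma 1: if two matrices each have rank at least `n/2`
but share fewer than `n/2` common zero rows, then the set of diagonal channel
realizations under which the joint interference has rank at most `n/2` is
Lebesgue-null. -/
theorem stmt_1 (n m₁ m₂ : ℕ) (hn : 0 < n) (hne : Even n)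
    (V₁ : Matrix (Fin n) (Fin m₁) ℂ) (V₂ : Matrix (Fin n) (Fin m₂) ℂ)
    (hr₁ : n / 2 ≤ V₁.rank) (hr₂ : n / 2 ≤ V₂.rank)
    (hz : {t : Fin n | (∀ c, V₁ t c = 0) ∧ (∀ c, V₂ t c = 0)}.ncard < n / 2) :
    MeasureTheory.volume {p : (Fin n → ℂ) × (Fin n → ℂ) |
      (Matrix.fromCols (Matrix.diagonal p.1 * V₁)
        (Matrix.diagonal p.2 * V₂)).rank ≤ n / 2} = 0 :=
  stmt_1_general n m₁ m₂ V₁ V₂ hr₁ hr₂ hz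
end

section
/- Let n be a positive integer, let v ∈ ℂⁿ, and let W be a linear subspace of ℂⁿ whose dimension is strictly less than the number of nonzero coordinates of v. Then the set {d ∈ ℂⁿ : d_i ≠ 0 for all i, and the vector (v_1/d_1, …, v_n/d_n) lies in W} is a Lebesgue-null subset of ℂⁿ. (This is the genericity step in the converse proof of the paper: a fixed interference vector with more than n/2 nonzero entries lies in a fixed (n/2)-dimensional subspace after inverse diagonal channel scaling only for a measure-zero set of channel realizations.) -/
open MeasureTheory Set

/-!
With `D_v` the diagonal matrix of `v`, the set in question is the image, under coordinatewise
inversion, of the nowhere-zero part of the subspace `D_v⁻¹(W)`. This subspace is proper, since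
`D_v` maps the whole space onto a subspace of dimension `#supp v > dim W`, so it is Lebesgue-null;
and coordinatewise inversion is differentiable away from the coordinate hyperplanes, so it maps
null sets to null sets.
-/

theorem Matrix.comap_mulVecLin_diagonal_ne_top {K ι : Type*} [Field K] [Fintype ι]
    [DecidableEq ι] (v : ι → K) (W : Submodule K (ι → K))
    (h : Module.finrank K W < {i | v i ≠ 0}.ncard) :
    W.comap (Matrix.diagonal v).mulVecLin ≠ ⊤ := by
  classical
  intro htop
  have hrange : LinearMap.range (Matrix.diagonal v).mulVecLin ≤ W :=
    LinearMap.range_le_iff_comap.2 htop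
  have hrank := Submodule.finrank_mono hrange
  rw [← Matrix.rank, Matrix.rank_diagonal, ← Nat.card_eq_fintype_card] at hrank
  rw [← Nat.card_coe_set_eq] at h
  exact absurd hrank (not_le.2 h)

theorem Submodule.addHaar_eq_zero_of_ne_top {E : Type*} [NormedAddCommGroup E]
    [NormedSpace ℂ E] [FiniteDimensional ℂ E] [MeasurableSpace E] [BorelSpace E]
    (μ : Measure E) [μ.IsAddHaarMeasure] (s : Submodule ℂ E) (hs : s ≠ ⊤) :
    μ s = 0 :=
  Measure.addHaar_submodule μ (s.restrictScalars ℝ) (by simpa using hs)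

theorem addHaar_image_inv_inter_eq_zero {𝕜 ι : Type*} [RCLike 𝕜] [Fintype ι]
    [MeasurableSpace (ι → 𝕜)] [BorelSpace (ι → 𝕜)] (μ : Measure (ι → 𝕜))
    [μ.IsAddHaarMeasure] {s : Set (ι → 𝕜)} (hs : μ s = 0) :
    μ ((·⁻¹) '' (s ∩ {d | ∀ i, d i ≠ 0})) = 0 := by
  refine addHaar_image_eq_zero_of_differentiableOn_of_addHaar_eq_zero μ ?_
    (measure_mono_null inter_subset_left hs)
  intro d hd
  refine (DifferentiableAt.restrictScalars (𝕜' := 𝕜) ℝ ?_).differentiableWithinAt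
  exact differentiableAt_pi.2 fun i =>
    (differentiableAt_inv (hd.2 i)).comp d (differentiableAt_apply i d)

theorem stmt_5_general (n : ℕ) (v : Fin n → ℂ) (W : Submodule ℂ (Fin n → ℂ))
    (h : Module.finrank ℂ W < {i : Fin n | v i ≠ 0}.ncard) :
    MeasureTheory.volume
      {d : Fin n → ℂ | (∀ i, d i ≠ 0) ∧ (fun i => v i / d i) ∈ W} = 0 := by
  set V := W.comap (Matrix.diagonal v).mulVecLin
  have hV : volume (V : Set (Fin n → ℂ)) = 0 :=
    V.addHaar_eq_zero_of_ne_top volume (Matrix.comap_mulVecLin_diagonal_ne_top v W h)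
  refine measure_mono_null ?_ (addHaar_image_inv_inter_eq_zero volume hV)
  rintro d ⟨hd, hvd⟩
  refine ⟨d⁻¹, ⟨?_, fun i => inv_ne_zero (hd i)⟩, inv_inv d⟩
  have hdiag : (Matrix.diagonal v).mulVecLin d⁻¹ = fun i => v i / d i := by
    ext i
    simp [Matrix.mulVec_diagonal, div_eq_mul_inv]
  show (Matrix.diagonal v).mulVecLin d⁻¹ ∈ W
  rwa [hdiag]

/-- Genericity step: a fixed vector `v` whose support is strictly larger than
`dim W` lies in `W` after componentwise division by a nowhere-zero diagonal
channel vector `d` only for a Lebesgue-null set of `d`. -/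
theorem stmt_5 (n : ℕ) (hn : 0 < n) (v : Fin n → ℂ) (W : Submodule ℂ (Fin n → ℂ))
    (h : Module.finrank ℂ W < {i : Fin n | v i ≠ 0}.ncard) :
    MeasureTheory.volume
      {d : Fin n → ℂ | (∀ i, d i ≠ 0) ∧ (fun i => v i / d i) ∈ W} = 0 :=
  stmt_5_general n v W h
end

section
/- Let n, m₁, m₂ be positive integers with n even, and let A ∈ ℂ^{n×m₁} and B ∈ ℂ^{n×m₂} be matrices such that there exists a row index t for which row t of A and row t of B are both zero, and such that rank(A) ≥ n/2. Then the image of the column span of B under the orthogonal projection of ℂⁿ onto the orthogonal complement of the column span of A has dimension at most n/2 − 1; in particular it is strictly less than n/2. (This is the deterministic core of Lemma 2 of the paper: if an interfering transmitter and the desired transmitter of a receiver share a common silent slot while the interference already occupies an (n/2)-dimensional subspace, the receiver cannot recover n/2 dimensions of its desired signal.) -/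
/-- The column span of an `n × m` complex matrix, viewed as a subspace of the
standard inner product space `ℂⁿ`. -/
noncomputable def colspanE (n m : ℕ) (A : Matrix (Fin n) (Fin m) ℂ) :
    Submodule ℂ (EuclideanSpace ℂ (Fin n)) :=
  Submodule.span ℂ
    (Set.range fun c : Fin m => (WithLp.equiv 2 (Fin n → ℂ)).symm (fun i => A i c))

/-!
If `U` and `V` both lie in a proper subspace `W`, then projecting `V` onto `Uᗮ` keeps it inside
`W`, while `Uᗮ` contains the nonzero subspace `Wᗮ`; so the image of `V` is a proper subspace of
`Uᗮ`. Here `W` is the hyperplane of vectors vanishing at the common zero row `t`, and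
`dim Uᗮ = n - rank A ≤ n / 2`.
-/

open Module

namespace Submodule

variable {𝕜 E : Type*} [RCLike 𝕜] [NormedAddCommGroup E] [InnerProductSpace 𝕜 E]

theorem orthogonalProjectionOnto_orthogonal_mem {U W : Submodule 𝕜 E}
    [U.HasOrthogonalProjection] (hU : U ≤ W) {v : E} (hv : v ∈ W) :
    (Uᗮ.orthogonalProjectionOnto v : E) ∈ W := by
  rw [U.orthogonalProjectionOnto_orthogonal]
  exact W.sub_mem hv (hU (U.orthogonalProjectionOnto v).2)

theorem finrank_map_orthogonalProjectionOnto_orthogonal_lt [FiniteDimensional 𝕜 E]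
    {U V W : Submodule 𝕜 E} (hU : U ≤ W) (hV : V ≤ W) (hW : W ≠ ⊤) :
    finrank 𝕜 (V.map (Uᗮ.orthogonalProjectionOnto : E →ₗ[𝕜] Uᗮ)) < finrank 𝕜 Uᗮ := by
  refine finrank_lt fun htop => hW ?_
  rw [← orthogonal_eq_bot_iff, eq_bot_iff]
  intro w hw
  obtain ⟨v, hv, hvw⟩ : (⟨w, orthogonal_le hU hw⟩ : Uᗮ) ∈ V.map _ := htop ▸ mem_top
  have hwW : w ∈ W := by
    have := orthogonalProjectionOnto_orthogonal_mem hU (hV hv)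
    rwa [← ContinuousLinearMap.coe_coe, hvw] at this
  exact (inf_orthogonal_eq_bot W).le ⟨hwW, hw⟩

end Submodule

theorem EuclideanSpace.ker_proj_ne_top {𝕜 ι : Type*} [RCLike 𝕜] [Fintype ι] [DecidableEq ι]
    (t : ι) : LinearMap.ker (EuclideanSpace.proj t : EuclideanSpace 𝕜 ι →L[𝕜] 𝕜).toLinearMap ≠ ⊤ :=
  fun h => by simpa using h.ge (Submodule.mem_top (x := EuclideanSpace.single t (1 : 𝕜)))

theorem colspanE_le_ker_proj {n m : ℕ} {A : Matrix (Fin n) (Fin m) ℂ} {t : Fin n}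
    (hA : ∀ c, A t c = 0) :
    colspanE n m A ≤
      LinearMap.ker (EuclideanSpace.proj t : EuclideanSpace ℂ (Fin n) →L[ℂ] ℂ).toLinearMap := by
  rw [colspanE, Submodule.span_le]
  rintro x ⟨c, rfl⟩
  simp [hA c]

theorem finrank_colspanE (n m : ℕ) (A : Matrix (Fin n) (Fin m) ℂ) :
    finrank ℂ (colspanE n m A) = A.rank := by
  have : colspanE n m A =
      (Submodule.span ℂ (Set.range A.col)).map
        (WithLp.linearEquiv 2 ℂ (Fin n → ℂ)).symm.toLinearMap := by
    rw [Submodule.map_span, ← Set.range_comp]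
    rfl
  rw [this, LinearEquiv.finrank_map_eq, Matrix.rank, Matrix.range_mulVecLin]

theorem stmt_7_general (n m₁ m₂ : ℕ) (hne : Even n)
    (A : Matrix (Fin n) (Fin m₁) ℂ) (B : Matrix (Fin n) (Fin m₂) ℂ)
    (hzero : ∃ t : Fin n, (∀ c, A t c = 0) ∧ (∀ c, B t c = 0))
    (hrA : n / 2 ≤ A.rank) :
    Module.finrank ℂ
        ↥((colspanE n m₂ B).map (Submodule.orthogonalProjectionOnto (colspanE n m₁ A)ᗮ).toLinearMap)
        ≤ n / 2 - 1
    ∧ Module.finrank ℂ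
        ↥((colspanE n m₂ B).map (Submodule.orthogonalProjectionOnto (colspanE n m₁ A)ᗮ).toLinearMap)
        < n / 2 := by
  obtain ⟨t, hAt, hBt⟩ := hzero
  have hlt := Submodule.finrank_map_orthogonalProjectionOnto_orthogonal_lt
    (colspanE_le_ker_proj hAt) (colspanE_le_ker_proj hBt) (EuclideanSpace.ker_proj_ne_top t)
  have hdim := (colspanE n m₁ A).finrank_add_finrank_orthogonal
  rw [finrank_euclideanSpace_fin, finrank_colspanE] at hdim
  obtain ⟨k, rfl⟩ := hne
  omega

/-- Deterministic core of Lemma 2: if `A` and `B` share a common zero row and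
`rank A ≥ n/2`, then the projection of the column span of `B` onto the
orthogonal complement of the column span of `A` has dimension at most
`n/2 - 1`, in particular strictly less than `n/2`. -/
theorem stmt_7 (n m₁ m₂ : ℕ) (hn : 0 < n) (hne : Even n)
    (hm₁ : 0 < m₁) (hm₂ : 0 < m₂)
    (A : Matrix (Fin n) (Fin m₁) ℂ) (B : Matrix (Fin n) (Fin m₂) ℂ)
    (hzero : ∃ t : Fin n, (∀ c, A t c = 0) ∧ (∀ c, B t c = 0))
    (hrA : n / 2 ≤ A.rank) :
    Module.finrank ℂ
        ↥((colspanE n m₂ B).map (Submodule.orthogonalProjectionOnto (colspanE n m₁ A)ᗮ).toLinearMap)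
        ≤ n / 2 - 1
    ∧ Module.finrank ℂ
        ↥((colspanE n m₂ B).map (Submodule.orthogonalProjectionOnto (colspanE n m₁ A)ᗮ).toLinearMap)
        < n / 2 :=
  stmt_7_general n m₁ m₂ hne A B hzero hrA
end

section
/- Let C be a K-user network topology with interference sets IN_j and reduced conflict graph G, and let c : {1,…,K} → {1,2} be a proper 2-coloring of G (meaning c(i) ≠ c(j) whenever (i,j) is an edge of G). Then for every user k and every pair of distinct users i, s with i ∈ IN_k and s ∈ IN_k, we have c(i) = c(s). That is, in any proper 2-coloring of the reduced conflict graph, all transmitters interfering at a common receiver receive the same color, which moreover differs from the color of that receiver's own transmitter. -/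
/-- The interference set of receiver `j`: transmitters other than `j` that are
connected to receiver `j`. -/
def IN (K : ℕ) (C : Fin K → Fin K → Prop) (j : Fin K) : Set (Fin K) :=
  {i | i ≠ j ∧ C i j}

/-- The reduced conflict graph: there is a directed edge from `i` to `j` iff
`i ≠ j`, transmitter `i` is connected to receiver `j`, and there exist
`s, k ≠ i` with `s ≠ k` such that both transmitters `i` and `s` are connected
to receiver `k`. -/
def redEdge (K : ℕ) (C : Fin K → Fin K → Prop) (i j : Fin K) : Prop :=
  i ≠ j ∧ C i j ∧ ∃ s k : Fin K, s ≠ i ∧ k ≠ i ∧ s ≠ k ∧ C i k ∧ C s k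

/-- In any proper 2-coloring of the reduced conflict graph, all transmitters
interfering at a common receiver get the same color, which differs from the
color of that receiver's own transmitter. -/
theorem stmt_9 (K : ℕ) (C : Fin K → Fin K → Prop) (hC : ∀ j, C j j)
    (c : Fin K → Fin 2) (hc : ∀ i j, redEdge K C i j → c i ≠ c j)
    (k i s : Fin K) (his : i ≠ s)
    (hi : i ∈ IN K C k) (hs : s ∈ IN K C k) :
    c i = c s ∧ c i ≠ c k := by
  obtain ⟨hik, hCik⟩ := hi
  obtain ⟨hsk, hCsk⟩ := hs
  have h1 : c i ≠ c k := hc i k ⟨hik, hCik, s, k, Ne.symm his, Ne.symm hik, hsk, hCik, hCsk⟩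
  have h2 : c s ≠ c k := hc s k ⟨hsk, hCsk, i, k, his, Ne.symm hsk, hik, hCsk, hCik⟩
  refine ⟨?_, h1⟩
  omega
end

section
/- Let C be a K-user network topology with interference sets IN_j and reduced conflict graph G. If G is bipartite (i.e., admits a proper 2-coloring), then there do not exist three distinct users i, j, k such that i ∈ IN_k, j ∈ IN_k, and i ∈ IN_j. -/
/-- If the reduced conflict graph is bipartite, then there is no internal
conflict: no three distinct users `i, j, k` with `i, j` both interfering at
receiver `k` and `i` also interfering at receiver `j`. -/
theorem stmt_10 (K : ℕ) (C : Fin K → Fin K → Prop) (hC : ∀ j, C j j)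
    (hbip : ∃ c : Fin K → Fin 2, ∀ i j, redEdge K C i j → c i ≠ c j) :
    ¬ ∃ i j k : Fin K, i ≠ j ∧ i ≠ k ∧ j ≠ k ∧
      i ∈ IN K C k ∧ j ∈ IN K C k ∧ i ∈ IN K C j := by
  rintro ⟨i, j, k, hij, hik, hjk, ⟨-, hCik⟩, ⟨-, hCjk⟩, ⟨-, hCij⟩⟩
  obtain ⟨c, hc⟩ := hbip
  have e1 : redEdge K C i j := ⟨hij, hCij, j, k, Ne.symm hij, Ne.symm hik, hjk, hCik, hCjk⟩
  have e2 : redEdge K C i k := ⟨hik, hCik, j, k, Ne.symm hij, Ne.symm hik, hjk, hCik, hCjk⟩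
  have e3 : redEdge K C j k := ⟨hjk, hCjk, i, k, hij, Ne.symm hjk, hik, hCjk, hCik⟩
  have h1 := hc i j e1
  have h2 := hc i k e2
  have h3 := hc j k e3
  have : (c i).val ≠ (c j).val := fun h => h1 (Fin.ext h)
  have : (c i).val ≠ (c k).val := fun h => h2 (Fin.ext h)
  have : (c j).val ≠ (c k).val := fun h => h3 (Fin.ext h)
  have hi := (c i).isLt
  have hj := (c j).isLt
  have hk := (c k).isLt
  omega
end

section
/- Let C be a K-user network topology with interference sets IN_j and reduced conflict graph G, and let n be a positive even integer. Suppose there exist finite sets Z_1, …, Z_K ⊆ {1,…,n} (the sets of 'silent time slots' of the K transmitters) satisfying: (a) |Z_i| ≤ n/2 for every user i; (b) for every pair of distinct users i, j for which there exists a user k ∉ {i, j} with i ∈ IN_k and j ∈ IN_k, we have |Z_i ∩ Z_j| ≥ n/2; and (c) for every pair of users i ≠ k with C(i,k), if |Z_i| = n/2 and |Z_k| = n/2 then Z_i ∩ Z_k = ∅. Then G is bipartite, i.e., it admits a proper 2-coloring. (This is the combinatorial heart of the converse of Theorem 1 of the paper: the silence patterns forced by Lemmas 1 and 2 on any linear scheme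 achieving half symmetric DoF yield a 2-coloring of the reduced conflict graph.) -/
/-- Combinatorial heart of the converse of Theorem 1: silence patterns
satisfying the properties forced by Lemmas 1 and 2 on any linear scheme
achieving half symmetric DoF yield a proper 2-coloring of the reduced
conflict graph, i.e. the reduced conflict graph is bipartite. -/
theorem stmt_11 (K : ℕ) (C : Fin K → Fin K → Prop) (hC : ∀ j, C j j)
    (n : ℕ) (hn : 0 < n) (hne : Even n)
    (Z : Fin K → Finset (Fin n))
    (ha : ∀ i, (Z i).card ≤ n / 2)
    (hb : ∀ i j : Fin K, i ≠ j →
      (∃ k : Fin K, k ≠ i ∧ k ≠ j ∧ i ∈ IN K C k ∧ j ∈ IN K C k) →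
      n / 2 ≤ (Z i ∩ Z j).card)
    (hsil : ∀ i k : Fin K, i ≠ k → C i k →
      (Z i).card = n / 2 → (Z k).card = n / 2 → Z i ∩ Z k = ∅) :
    ∃ c : Fin K → Fin 2, ∀ i j, redEdge K C i j → c i ≠ c j := by
  classical
  set t : Fin n := ⟨0, hn⟩ with ht
  -- any source of a reduced edge has |Z i| = n/2
  have hsrc : ∀ i j, redEdge K C i j → (Z i).card = n / 2 := by
    rintro i j ⟨hij, hCij, s, k, hsi, hki, hsk, hCik, hCsk⟩
    refine le_antisymm (ha i) ?_
    have h1 : n / 2 ≤ (Z i ∩ Z s).card :=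
      hb i s (Ne.symm hsi) ⟨k, hki, Ne.symm hsk, ⟨Ne.symm hki, hCik⟩, ⟨hsk, hCsk⟩⟩
    exact h1.trans (Finset.card_le_card Finset.inter_subset_left)
  -- two distinct in-neighbors of a common receiver have equal Z-sets
  have heqZ : ∀ i i' j, redEdge K C i j → redEdge K C i' j → i ≠ i' → Z i = Z i' := by
    intro i i' j he he' hne'
    have hi : (Z i).card = n / 2 := hsrc i j he
    have hi' : (Z i').card = n / 2 := hsrc i' j he'
    have hinter : n / 2 ≤ (Z i ∩ Z i').card :=
      hb i i' hne' ⟨j, Ne.symm he.1, Ne.symm he'.1, ⟨he.1, he.2.1⟩, ⟨he'.1, he'.2.1⟩⟩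
    have h1 : Z i ∩ Z i' = Z i :=
      Finset.eq_of_subset_of_card_le Finset.inter_subset_left (by omega)
    have h2 : Z i ∩ Z i' = Z i' :=
      Finset.eq_of_subset_of_card_le Finset.inter_subset_right (by omega)
    rw [← h1, h2]
  refine ⟨fun j => if (Z j).card = n / 2 then (if t ∈ Z j then 0 else 1)
      else (if ∃ i, redEdge K C i j ∧ t ∈ Z i then 1 else 0), ?_⟩
  intro i j he
  have hi : (Z i).card = n / 2 := hsrc i j he
  simp only [hi, if_true, if_pos rfl]
  by_cases hj : (Z j).card = n / 2
  · -- both have card n/2 : disjoint, union is everything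
    rw [if_pos hj]
    have hdisj := hsil i j he.1 he.2.1 hi hj
    have hcard : (Z i ∪ Z j).card = n := by
      have := Finset.card_union_add_card_inter (Z i) (Z j)
      rw [hdisj] at this
      simp at this
      obtain ⟨m, hm⟩ := hne
      omega
    have huniv : Z i ∪ Z j = Finset.univ := by
      apply Finset.eq_univ_of_card
      simpa using hcard
    have htmem : t ∈ Z i ∪ Z j := huniv ▸ Finset.mem_univ t
    have hnotboth : ¬ (t ∈ Z i ∧ t ∈ Z j) := by
      rintro ⟨h1, h2⟩
      have : t ∈ Z i ∩ Z j := Finset.mem_inter.mpr ⟨h1, h2⟩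
      rw [hdisj] at this
      exact absurd this (Finset.notMem_empty t)
    rcases Finset.mem_union.mp htmem with h1 | h2
    · have h2 : t ∉ Z j := fun h => hnotboth ⟨h1, h⟩
      simp [h1, h2]
    · have h1 : t ∉ Z i := fun h => hnotboth ⟨h, h2⟩
      simp [h1, h2]
  · rw [if_neg hj]
    by_cases hti : t ∈ Z i
    · rw [if_pos hti, if_pos ⟨i, he, hti⟩]
      decide
    · rw [if_neg hti, if_neg ?_]
      · decide
      · rintro ⟨i', he', hti'⟩
        rcases eq_or_ne i i' with rfl | hne'
        · exact hti hti'
        · rw [heqZ i i' j he he' hne'] at hti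
          exact hti hti'
end

section
/- Let C be a K-user network topology with interference sets IN_j and reduced conflict graph G, and suppose c : {1,…,K} → {1,2} is a proper 2-coloring of G. Define activation sets T_1, …, T_K ⊆ {1,2} by: T_i = {1,2} if vertex i has no outgoing edge in G, and T_i = {c(i)} otherwise. Then for every user j, at least one of the following holds: (1) there exists a time slot t ∈ T_j such that t ∉ T_i for every i ∈ IN_j (transmitter j is active in a slot where all of its interferers are silent); or (2) IN_j = {i} is a singleton and at least one of T_i, T_j equals {1,2} (receiver j has a single interferer and at least one of the two transmitters is active in both slots). Moreover, alternative (1) always holds whenever |IN_j| ≥ 2. (This is the combinatorial content of the achievability proof of Theorem 1 of the paper: when the reduced conflict graph is bipartite, the described two-slot retransmission schedule neutralizes all interference and allows every receiver to decode, achieving half symmetric DoF.) -/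
/- Combinatorial content of the achievability proof of Theorem 1: given a
proper 2-coloring of the reduced conflict graph, the two-slot retransmission
schedule (vertices without outgoing edges are active in both slots, other
vertices are active only in the slot given by their color) lets every receiver
decode: either its transmitter is active in a slot where all its interferers
are silent, or it has a single interferer and one of the two transmitters is
active in both slots; the first alternative always holds when the receiver has
at least two interferers. -/
open Classical in
theorem stmt_12 (K : ℕ) (C : Fin K → Fin K → Prop) (hC : ∀ j, C j j)
    (c : Fin K → Fin 2) (hc : ∀ i j, redEdge K C i j → c i ≠ c j)
    (T : Fin K → Finset (Fin 2))
    (hT : ∀ i, T i = if ∃ j, redEdge K C i j then {c i} else Finset.univ) :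
    (∀ j : Fin K,
      (∃ t ∈ T j, ∀ i ∈ IN K C j, t ∉ T i) ∨
      (∃ i : Fin K, IN K C j = {i} ∧ (T i = Finset.univ ∨ T j = Finset.univ)))
    ∧ (∀ j : Fin K, 2 ≤ (IN K C j).ncard →
        ∃ t ∈ T j, ∀ i ∈ IN K C j, t ∉ T i) := by
  have hcmem : ∀ j, c j ∈ T j := by
    intro j; rw [hT j]; split <;> simp
  have key : ∀ j, (∀ i ∈ IN K C j, ∃ k, redEdge K C i k) →
      ∃ t ∈ T j, ∀ i ∈ IN K C j, t ∉ T i := by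
    intro j h
    refine ⟨c j, hcmem j, ?_⟩
    intro i hi
    have hout := h i hi
    have hedge : redEdge K C i j := ⟨hi.1, hi.2, hout.choose_spec.2.2⟩
    have hTi : T i = {c i} := by rw [hT i, if_pos hout]
    rw [hTi]
    simp [Ne.symm (hc i j hedge)]
  constructor
  · intro j
    by_cases hall : ∀ i ∈ IN K C j, ∃ k, redEdge K C i k
    · exact Or.inl (key j hall)
    · push_neg at hall
      obtain ⟨i, hi, hno⟩ := hall
      right
      refine ⟨i, ?_, Or.inl ?_⟩
      · apply Set.eq_singleton_iff_unique_mem.mpr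
        refine ⟨hi, ?_⟩
        intro s hs
        by_contra hne
        exact hno j ⟨hi.1, hi.2, s, j, hne, Ne.symm hi.1, hs.1, hi.2, hs.2⟩
      · rw [hT i, if_neg (not_exists.mpr hno)]
  · intro j h2
    apply key
    intro i hi
    have h1 : 1 < (IN K C j).ncard := h2
    obtain ⟨a, b, ha, hb, hab⟩ := (Set.one_lt_ncard_iff (Set.toFinite _)).mp h1
    rcases eq_or_ne a i with rfl | hne
    · exact ⟨j, hi.1, hi.2, b, j, Ne.symm hab, Ne.symm hi.1, hb.1, hi.2, hb.2⟩
    · exact ⟨j, hi.1, hi.2, a, j, hne, Ne.symm hi.1, ha.1, hi.2, ha.2⟩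
end
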